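/- arXiv:2603.04295 — 5 statements merged into one kernel-verified Lean document; each statement's English description precedes it below -/
import Mathlib

section
/- Let a/b and c/d be reduced fractions with gcd(b,d)=1 and d_F = |ad−bc|. If d_F divides b²+d², then the pair is inner regular, i.e. gcd(ab+cd, b²+d², a²+c²) = d_F. -/
/-!
Write `D = ad - bc`. The identities `b·(ab+cd) = a(b²+d²) - dD`, `d·(ab+cd) = c(b²+d²) + bD`,
`b·(a²+c²) = a(ab+cd) - cD`, `d·(a²+c²) = c(ab+cd) + aD` and `bD = d(ab+cd) - c(b²+d²)`,
`dD = a(b²+d²) - b(ab+cd)`, together with a Bézout relation `ub + vd = 1`, show that once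
`D ∣ b²+d²`, an integer divides `D` iff it divides all three of `ab+cd`, `b²+d²`, `a²+c²`.
-/

theorem IsCoprime.dvd_of_dvd_mul_of_dvd_mul {R : Type*} [CommRing R] {b d k x : R}
    (h : IsCoprime b d) (hb : k ∣ b * x) (hd : k ∣ d * x) : k ∣ x := by
  obtain ⟨u, v, huv⟩ := h
  have hx : x = u * (b * x) + v * (d * x) := by linear_combination (-x) * huv
  rw [hx]
  exact dvd_add (hb.mul_left u) (hd.mul_left v)

section FareyPair

variable {R : Type*} [CommRing R] {a b c d k : R}

theorem dvd_mul_add_mul_of_dvd_det (hbd : IsCoprime b d) (hD : k ∣ a * d - b * c)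
    (h : k ∣ b ^ 2 + d ^ 2) : k ∣ a * b + c * d := by
  refine hbd.dvd_of_dvd_mul_of_dvd_mul ?_ ?_
  · have e : b * (a * b + c * d) = a * (b ^ 2 + d ^ 2) - d * (a * d - b * c) := by ring
    exact e ▸ dvd_sub (h.mul_left a) (hD.mul_left d)
  · have e : d * (a * b + c * d) = c * (b ^ 2 + d ^ 2) + b * (a * d - b * c) := by ring
    exact e ▸ dvd_add (h.mul_left c) (hD.mul_left b)

theorem dvd_sq_add_sq_of_dvd_det (hbd : IsCoprime b d) (hD : k ∣ a * d - b * c)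
    (h : k ∣ a * b + c * d) : k ∣ a ^ 2 + c ^ 2 := by
  refine hbd.dvd_of_dvd_mul_of_dvd_mul ?_ ?_
  · have e : b * (a ^ 2 + c ^ 2) = a * (a * b + c * d) - c * (a * d - b * c) := by ring
    exact e ▸ dvd_sub (h.mul_left a) (hD.mul_left c)
  · have e : d * (a ^ 2 + c ^ 2) = c * (a * b + c * d) + a * (a * d - b * c) := by ring
    exact e ▸ dvd_add (h.mul_left c) (hD.mul_left a)

theorem dvd_det_of_dvd_mul_add_mul (hbd : IsCoprime b d) (h₁ : k ∣ a * b + c * d)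
    (h₂ : k ∣ b ^ 2 + d ^ 2) : k ∣ a * d - b * c := by
  refine hbd.dvd_of_dvd_mul_of_dvd_mul ?_ ?_
  · have e : b * (a * d - b * c) = d * (a * b + c * d) - c * (b ^ 2 + d ^ 2) := by ring
    exact e ▸ dvd_sub (h₁.mul_left d) (h₂.mul_left c)
  · have e : d * (a * d - b * c) = a * (b ^ 2 + d ^ 2) - b * (a * b + c * d) := by ring
    exact e ▸ dvd_sub (h₂.mul_left a) (h₁.mul_left b)

end FareyPair

theorem stmt_1_general (a b c d : ℤ) (hbd : Int.gcd b d = 1)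
    (hdvd : ((a*d - b*c).natAbs : ℤ) ∣ (b^2 + d^2)) :
    Int.gcd (a*b + c*d) (Int.gcd (b^2 + d^2) (a^2 + c^2)) = (a*d - b*c).natAbs := by
  have hcop : IsCoprime b d := Int.isCoprime_iff_gcd_eq_one.mpr hbd
  have hD₂ : a * d - b * c ∣ b ^ 2 + d ^ 2 := Int.natAbs_dvd.mp hdvd
  have hD₁ := dvd_mul_add_mul_of_dvd_det hcop dvd_rfl hD₂
  have hD₃ := dvd_sq_add_sq_of_dvd_det hcop dvd_rfl hD₁
  set g := Int.gcd (a*b + c*d) (Int.gcd (b^2 + d^2) (a^2 + c^2))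
  have hg₁ : (g : ℤ) ∣ a * b + c * d := Int.gcd_dvd_left _ _
  have hg₂ : (g : ℤ) ∣ b ^ 2 + d ^ 2 := (Int.gcd_dvd_right _ _).trans (Int.gcd_dvd_left _ _)
  have hgD : (g : ℤ) ∣ a * d - b * c := dvd_det_of_dvd_mul_add_mul hcop hg₁ hg₂
  have hDg : a * d - b * c ∣ (g : ℤ) := Int.dvd_coe_gcd hD₁ (Int.dvd_coe_gcd hD₂ hD₃)
  exact Nat.dvd_antisymm (Int.natCast_dvd_natCast.mp (Int.dvd_natAbs.mpr hgD))
    (Int.natCast_dvd_natCast.mp (Int.natAbs_dvd.mpr hDg))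

/-- If a/b, c/d are reduced fractions with gcd(b,d)=1 and the Farey determinant
d_F = |ad−bc| divides b²+d², then the pair is inner regular:
gcd(ab+cd, b²+d², a²+c²) = d_F. -/
theorem stmt_1 (a b c d : ℤ) (hb : 0 < b) (hd : 0 < d)
    (hab : Int.gcd a b = 1) (hcd : Int.gcd c d = 1) (hbd : Int.gcd b d = 1)
    (hdvd : ((a*d - b*c).natAbs : ℤ) ∣ (b^2 + d^2)) :
    Int.gcd (a*b + c*d) (Int.gcd (b^2 + d^2) (a^2 + c^2)) = (a*d - b*c).natAbs :=
  stmt_1_general a b c d hbd hdvd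
end

section
/- Every pair of reduced fractions (a/b, c/d) with |ad−bc| = 2 is inner regular: gcd(ab+cd, b²+d², a²+c²) = 2. -/
/-!
Lagrange's identity `(a² + c²)(b² + d²) - (ab + cd)² = (ad - bc)²` shows that the square of
the gcd divides `(ad - bc)² = 4`, so the gcd divides `2`. Conversely, modulo `2` the vectors
`(a, b)` and `(c, d)` are nonzero (the fractions are reduced) and linearly dependent (the
determinant is even), hence equal; so `ab + cd`, `b² + d²` and `a² + c²` are all even.
-/

/-- The pair `(a/b, c/d)` is inner regular when this equals `|ad - bc|`. -/
def innerGcd (a b c d : ℤ) : ℕ :=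
  Int.gcd (a * b + c * d) (Int.gcd (b ^ 2 + d ^ 2) (a ^ 2 + c ^ 2))

theorem innerGcd_dvd_natAbs_det (a b c d : ℤ) : innerGcd a b c d ∣ (a * d - b * c).natAbs := by
  set g : ℤ := (innerGcd a b c d : ℤ)
  have hg₁ : g ∣ a * b + c * d := Int.gcd_dvd_left _ _
  have hg₂₃ : g ∣ Int.gcd (b ^ 2 + d ^ 2) (a ^ 2 + c ^ 2) := Int.gcd_dvd_right _ _
  have hg₂ : g ∣ b ^ 2 + d ^ 2 := hg₂₃.trans (Int.gcd_dvd_left _ _)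
  have hg₃ : g ∣ a ^ 2 + c ^ 2 := hg₂₃.trans (Int.gcd_dvd_right _ _)
  have lagrange : (a * d - b * c) ^ 2 = (a ^ 2 + c ^ 2) * (b ^ 2 + d ^ 2) - (a * b + c * d) ^ 2 := by
    ring
  have hsq : g ^ 2 ∣ (a * d - b * c) ^ 2 := by
    rw [lagrange]
    exact dvd_sub (sq g ▸ mul_dvd_mul hg₃ hg₂) (pow_dvd_pow_of_dvd hg₁ 2)
  exact Int.ofNat_dvd_left.mp ((Int.pow_dvd_pow_iff two_ne_zero).mp hsq)

theorem ZMod.eq_of_det_eq_zero_of_ne_zero {A B C D : ZMod 2} (hAB : (A, B) ≠ 0)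
    (hCD : (C, D) ≠ 0) (hdet : A * D - B * C = 0) : A = C ∧ B = D := by
  revert A B C D
  decide

theorem IsCoprime.prod_ne_zero {R : Type*} [CommSemiring R] [Nontrivial R] {x y : R}
    (h : IsCoprime x y) : (x, y) ≠ 0 := by
  rintro ⟨⟨⟩⟩
  exact not_isUnit_zero (isCoprime_zero_left.mp h)

theorem two_dvd_innerGcd {a b c d : ℤ} (hab : Int.gcd a b = 1) (hcd : Int.gcd c d = 1)
    (hdet : 2 ∣ a * d - b * c) : 2 ∣ innerGcd a b c d := by
  have ne_zero_mod_two (x y : ℤ) (h : Int.gcd x y = 1) : ((x : ZMod 2), (y : ZMod 2)) ≠ 0 :=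
    IsCoprime.prod_ne_zero ((Int.isCoprime_iff_gcd_eq_one.mpr h).map (Int.castRingHom (ZMod 2)))
  have hdet₂ : (a : ZMod 2) * d - b * c = 0 := by
    exact_mod_cast (ZMod.intCast_zmod_eq_zero_iff_dvd _ 2).mpr hdet
  obtain ⟨hac, hbd⟩ :=
    ZMod.eq_of_det_eq_zero_of_ne_zero (ne_zero_mod_two a b hab) (ne_zero_mod_two c d hcd) hdet₂
  have even (x : ℤ) (hx : (x : ZMod 2) = 0) : (2 : ℤ) ∣ x :=
    (ZMod.intCast_zmod_eq_zero_iff_dvd x 2).mp hx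
  have h₁ : (2 : ℤ) ∣ a * b + c * d :=
    even _ (by push_cast; rw [hac, hbd]; exact CharTwo.add_self_eq_zero _)
  have h₂ : (2 : ℤ) ∣ b ^ 2 + d ^ 2 :=
    even _ (by push_cast; rw [hbd]; exact CharTwo.add_self_eq_zero _)
  have h₃ : (2 : ℤ) ∣ a ^ 2 + c ^ 2 :=
    even _ (by push_cast; rw [hac]; exact CharTwo.add_self_eq_zero _)
  exact Int.ofNat_dvd.mp (Int.dvd_coe_gcd h₁ (Int.dvd_coe_gcd h₂ h₃))

theorem stmt_3_general (a b c d : ℤ)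
    (hab : Int.gcd a b = 1) (hcd : Int.gcd c d = 1)
    (hF : (a*d - b*c).natAbs = 2) :
    Int.gcd (a*b + c*d) (Int.gcd (b^2 + d^2) (a^2 + c^2)) = 2 := by
  have hdet : 2 ∣ a * d - b * c := Int.natAbs_dvd_natAbs.mp (by rw [hF]; rfl)
  have hdvd : innerGcd a b c d ∣ 2 := hF ▸ innerGcd_dvd_natAbs_det a b c d
  exact Nat.dvd_antisymm hdvd (two_dvd_innerGcd hab hcd hdet)

/-- Every pair of reduced fractions with |ad−bc| = 2 is inner regular:
gcd(ab+cd, b²+d², a²+c²) = 2. -/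
theorem stmt_3 (a b c d : ℤ) (hb : 0 < b) (hd : 0 < d)
    (hab : Int.gcd a b = 1) (hcd : Int.gcd c d = 1)
    (hF : (a*d - b*c).natAbs = 2) :
    Int.gcd (a*b + c*d) (Int.gcd (b^2 + d^2) (a^2 + c^2)) = 2 :=
  stmt_3_general a b c d hab hcd hF
end

section
/- Let (a/b, c/d) be reduced fractions with d_F = |ad−bc|, gcd(b,d)=1, the pair inner regular (gcd(ab+cd,b²+d²,a²+c²)=d_F), b | a²+1 and d | c²+1. Set r = (ab+cd)/d_F and s = (b²+d²)/d_F. Then s divides r²+1. -/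
/-!
Write `D = |ad - bc|`, so that `a b + c d = D r`, `b² + d² = D s`, and, by inner regularity,
`a² + c² = D t` for some `t`. The Brahmagupta–Fibonacci identity
`(ab + cd)² + (ad - bc)² = (a² + c²)(b² + d²)` then reads `D² (r² + 1) = D² s t`,
and cancelling `D²` gives `r² + 1 = s t`.
-/

theorem sq_add_one_eq_mul_of_mul_sq_add_sq_eq {R : Type*} [CommRing R] [NoZeroDivisors R]
    {D r s t : R} (hD : D ≠ 0) (h : (D * r) ^ 2 + D ^ 2 = (D * s) * (D * t)) :
    r ^ 2 + 1 = s * t :=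
  mul_left_cancel₀ (pow_ne_zero 2 hD) (by linear_combination h)

theorem stmt_7_general (a b c d r s : ℤ)
    (hne : a*d - b*c ≠ 0)
    (hreg : Int.gcd (a*b + c*d) (Int.gcd (b^2 + d^2) (a^2 + c^2)) = (a*d - b*c).natAbs)
    (hr : a*b + c*d = ((a*d - b*c).natAbs : ℤ) * r)
    (hs : b^2 + d^2 = ((a*d - b*c).natAbs : ℤ) * s) :
    s ∣ r^2 + 1 := by
  set D : ℤ := ((a*d - b*c).natAbs : ℤ) with hD
  have hD0 : D ≠ 0 := Int.natCast_ne_zero.mpr (Int.natAbs_ne_zero.mpr hne)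
  obtain ⟨t, ht⟩ : D ∣ a^2 + c^2 := by
    rw [hD, ← hreg]
    exact (Int.gcd_dvd_right _ _).trans (Int.gcd_dvd_right _ _)
  have hDsq : D ^ 2 = (a*d - b*c) ^ 2 := Int.natAbs_sq _
  refine ⟨t, sq_add_one_eq_mul_of_mul_sq_add_sq_eq hD0 ?_⟩
  rw [← hr, ← hs, ← ht, hDsq]
  ring

/-- For an inner regular pair (a/b, c/d) with gcd(b,d)=1, b ∣ a²+1, d ∣ c²+1,
setting r = (ab+cd)/d_F and s = (b²+d²)/d_F, one has s ∣ r²+1. -/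
theorem stmt_7 (a b c d r s : ℤ) (hb : 0 < b) (hd : 0 < d)
    (hab : Int.gcd a b = 1) (hcd : Int.gcd c d = 1) (hbd : Int.gcd b d = 1)
    (hne : a*d - b*c ≠ 0)
    (hreg : Int.gcd (a*b + c*d) (Int.gcd (b^2 + d^2) (a^2 + c^2)) = (a*d - b*c).natAbs)
    (hba : b ∣ a^2 + 1) (hdc : d ∣ c^2 + 1)
    (hr : a*b + c*d = ((a*d - b*c).natAbs : ℤ) * r)
    (hs : b^2 + d^2 = ((a*d - b*c).natAbs : ℤ) * s) :
    s ∣ r^2 + 1 :=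
  stmt_7_general a b c d r s hne hreg hr hs
end

section
/- Let a/b and c/d be reduced fractions with |ad−bc| = 2. Then gcd(a+c, b+d) = 2 and gcd(a−c, b−d) = 2, and the Farey determinant of the reduced fractions (a+c)/2 / ((b+d)/2) and (a−c)/2 / ((b−d)/2) is 1. -/
/-!
Reduced mod 2, a primitive vector `(a, b)` is a nonzero vector of `𝔽₂²`, and two nonzero vectors
of `𝔽₂²` with vanishing determinant are equal; hence `a ≡ c` and `b ≡ d (mod 2)`. Since
`(a ± c) d - (b ± d) c = ad - bc`, the even number `gcd (a ± c, b ± d)` divides `ad - bc = ±2`.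
Finally `(a + c)(b - d) - (a - c)(b + d) = -2 (ad - bc)`, so after halving both vectors the
determinant becomes `∓1`.
-/

theorem ZMod.two_eq_of_mul_sub_mul_eq_zero {x y z w : ZMod 2} (h : x * w - y * z = 0)
    (hxy : x ≠ 0 ∨ y ≠ 0) (hzw : z ≠ 0 ∨ w ≠ 0) : x = z ∧ y = w := by
  revert x y z w; decide

theorem Int.intCast_zmod_ne_zero_or_of_gcd_eq_one {n : ℕ} (hn : n ≠ 1) {a b : ℤ}
    (h : Int.gcd a b = 1) : (a : ZMod n) ≠ 0 ∨ (b : ZMod n) ≠ 0 := by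
  by_contra! hab
  simp only [ZMod.intCast_zmod_eq_zero_iff_dvd] at hab
  have hdvd := Int.dvd_coe_gcd hab.1 hab.2
  rw [h, Int.natCast_dvd_natCast, Nat.dvd_one] at hdvd
  exact hn hdvd

theorem Int.two_dvd_add_of_two_dvd_det {a b c d : ℤ} (hab : Int.gcd a b = 1)
    (hcd : Int.gcd c d = 1) (h : 2 ∣ a * d - b * c) : 2 ∣ a + c ∧ 2 ∣ b + d := by
  have hmod : ((a * d - b * c : ℤ) : ZMod 2) = 0 := (ZMod.intCast_zmod_eq_zero_iff_dvd _ 2).mpr h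
  push_cast at hmod
  obtain ⟨hac, hbd⟩ := ZMod.two_eq_of_mul_sub_mul_eq_zero hmod
    (Int.intCast_zmod_ne_zero_or_of_gcd_eq_one (by decide) hab)
    (Int.intCast_zmod_ne_zero_or_of_gcd_eq_one (by decide) hcd)
  rw [ZMod.intCast_eq_intCast_iff_dvd_sub] at hac hbd
  constructor <;> omega

theorem Int.gcd_eq_of_dvd_of_natAbs_det_eq {k : ℕ} {x y z w : ℤ} (hx : (k : ℤ) ∣ x)
    (hy : (k : ℤ) ∣ y) (h : (x * w - y * z).natAbs = k) : Int.gcd x y = k := by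
  refine Nat.dvd_antisymm ?_ (Int.natCast_dvd_natCast.mp (Int.dvd_coe_gcd hx hy))
  rw [← h, ← Int.ofNat_dvd_left]
  exact dvd_sub ((Int.gcd_dvd_left x y).mul_right w) ((Int.gcd_dvd_right x y).mul_right z)

theorem Int.two_mul_half_det {a b c d : ℤ} (hac : 2 ∣ a + c) (hbd : 2 ∣ b + d) :
    2 * ((a + c) / 2 * ((b - d) / 2) - (a - c) / 2 * ((b + d) / 2)) = -(a * d - b * c) := by
  obtain ⟨p, hp⟩ := hac
  obtain ⟨q, hq⟩ := hbd
  have hac' : a - c = 2 * (p - c) := by linarith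
  have hbd' : b - d = 2 * (q - d) := by linarith
  simp only [hp, hq, hac', hbd', Int.mul_ediv_cancel_left _ two_ne_zero]
  linear_combination d * hp - c * hq

theorem stmt_15_general (a b c d : ℤ)
    (hab : Int.gcd a b = 1) (hcd : Int.gcd c d = 1)
    (hF : (a*d - b*c).natAbs = 2) :
    Int.gcd (a+c) (b+d) = 2 ∧ Int.gcd (a-c) (b-d) = 2 ∧
    (((a+c)/2) * ((b-d)/2) - ((a-c)/2) * ((b+d)/2)).natAbs = 1 := by
  obtain ⟨hac, hbd⟩ := Int.two_dvd_add_of_two_dvd_det hab hcd (by omega)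
  have hac' : 2 ∣ a - c := by omega
  have hbd' : 2 ∣ b - d := by omega
  refine ⟨Int.gcd_eq_of_dvd_of_natAbs_det_eq (z := c) (w := d) hac hbd ?_,
    Int.gcd_eq_of_dvd_of_natAbs_det_eq (z := c) (w := d) hac' hbd' ?_, ?_⟩
  · rw [← hF]; congr 1; ring
  · rw [← hF]; congr 1; ring
  · have hhalf := congrArg Int.natAbs (Int.two_mul_half_det hac hbd)
    rw [Int.natAbs_mul, Int.natAbs_neg, hF] at hhalf
    simpa using hhalf

/-- If |ad−bc| = 2, then gcd(a+c,b+d) = 2 = gcd(a−c,b−d) and the Farey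
determinant of the reduced fractions ((a+c)/2)/((b+d)/2) and
((a−c)/2)/((b−d)/2) is 1. -/
theorem stmt_15 (a b c d : ℤ) (hb : 0 ≤ b) (hd : 0 ≤ d)
    (hab : Int.gcd a b = 1) (hcd : Int.gcd c d = 1)
    (hF : (a*d - b*c).natAbs = 2) :
    Int.gcd (a+c) (b+d) = 2 ∧ Int.gcd (a-c) (b-d) = 2 ∧
    (((a+c)/2) * ((b-d)/2) - ((a-c)/2) * ((b+d)/2)).natAbs = 1 :=
  stmt_15_general a b c d hab hcd hF
end

section
/- Let b be an integer and u the sequence u₀=0, u₁=1, u_{k+1}=3b u_k − u_{k−1}. Fix a rational a/b and set c_k = a/b + u_{k−1}/u_k. Then for all k, l ≥ 1 with u_k ≠ u_l: the Springborn difference c_k ⊖_S c_l = c_{k+l}, i.e. (u_{k−1}·u_k − u_{l−1}·u_l)/(u_k² − u_l²) = u_{k+l−1}/u_{k+l} (as an identity after clearing denominators: (u_{k−1}u_k − u_{l−1}u_l)·u_{k+l} = (u_k² − u_l²)·u_{k+l−1}). -/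
/-- Springborn difference of companions: for c_k = a/b + u_{k−1}/u_k with
u₀=0, u₁=1, u_{k+1}=3b·u_k − u_{k−1}, one has c_k ⊖_S c_l = c_{k+l}; after
clearing denominators this is
(u_{k−1}u_k − u_{l−1}u_l)·u_{k+l} = (u_k² − u_l²)·u_{k+l−1}. -/
theorem stmt_17 (b : ℤ) (u : ℕ → ℤ) (h0 : u 0 = 0) (h1 : u 1 = 1)
    (hrec : ∀ k, u (k+2) = 3*b*u (k+1) - u k)
    (k l : ℕ) (hk : 1 ≤ k) (hl : 1 ≤ l) (hne : u k ≠ u l) :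
    (u (k-1) * u k - u (l-1) * u l) * u (k+l)
      = ((u k)^2 - (u l)^2) * u (k+l-1) := by
  -- Cassini-type invariant
  have cass : ∀ n, u n * u (n+2) - u (n+1)^2 = -1 := by
    intro n
    induction n with
    | zero => rw [hrec 0]; rw [h0, h1]; ring
    | succ m ih =>
      have h' := hrec m
      rw [hrec (m+1), show m+1+1 = m+2 from rfl]
      linear_combination ih - u (m+2) * h'
  -- addition formula
  have hadd : ∀ m n, u (m+n+1) = u (m+1) * u (n+1) - u m * u n := by
    intro m
    induction m using Nat.twoStepInduction with
    | zero => intro n; rw [h0, h1]; ring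
    | one =>
      intro n
      rw [show (1:ℕ) + n + 1 = n + 2 from by omega, hrec n, hrec 0, h0, h1]
      ring
    | more m ih1 ih2 =>
      intro n
      have e1 : m + 2 + n + 1 = (m + n + 1) + 2 := by ring
      have e2 : m + 1 + n + 1 = (m + n + 1) + 1 := by ring
      rw [e1, hrec (m+n+1), ← e2, ih2 n, ih1 n, hrec (m+1), hrec m]
      ring
  obtain ⟨k', rfl⟩ : ∃ k', k = k' + 1 := ⟨k - 1, by omega⟩
  obtain ⟨l', rfl⟩ : ∃ l', l = l' + 1 := ⟨l - 1, by omega⟩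
  have e1 : k' + 1 + (l' + 1) = k' + (l' + 1) + 1 := by ring
  have e2 : k' + 1 + (l' + 1) - 1 = k' + l' + 1 := by omega
  have e3 : k' + 1 - 1 = k' := rfl
  have e4 : l' + 1 - 1 = l' := rfl
  rw [e2, e1, e3, e4, hadd k' (l'+1), hadd k' l', hrec l']
  have hK := cass k'
  have hL := cass l'
  rw [hrec k'] at hK
  rw [hrec l'] at hL
  linear_combination (u (k'+1) * u (l'+1)) * (hK - hL)
end
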